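/- arXiv:2410.21702 — 2 statements merged into one kernel-verified Lean document; each statement's English description precedes it below -/
import Mathlib

section
/- Let (E,𝒜) be a measurable space, μ a probability measure on (E,𝒜), and h : E → ℝ measurable with ∫ exp(h) dμ < ∞. With the convention ∞ − ∞ = −∞, log( ∫ exp(h) dμ ) = sup_ν ( ∫ h dν − KL(ν,μ) ), where the supremum is over all probability measures ν on (E,𝒜). Moreover, if h is bounded from above on the support of μ, the supremum is attained at the Gibbs distribution g defined by dg/dμ ∝ exp(h). -/
open MeasureTheory
open scoped ENNReal BigOperators Classical

noncomputable section

namespace PB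

/-- Kullback–Leibler divergence `KL(ν, μ) = ∫ log(dν/dμ) dν` if `ν ≪ μ` (with value `⊤`
when the integral is `+∞`), and `⊤` if `ν` is not absolutely continuous w.r.t. `μ`. -/
def KLdiv {E : Type*} [MeasurableSpace E] (ν μ : Measure E) : EReal :=
  if ν ≪ μ ∧ Integrable (fun x => Real.log ((ν.rnDeriv μ x).toReal)) ν then
    ((∫ x, Real.log ((ν.rnDeriv μ x).toReal) ∂ν : ℝ) : EReal)
  else ⊤

/-- the quantity `∫ h dν − KL(ν, μ)`, with the convention `∞ - ∞ = -∞` (the value is `⊥`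
whenever `∫ h dν` is not defined as a real number, which under `KL(ν,μ) < ∞` can only mean
`∫ h dν = -∞`). -/
def DVterm {E : Type*} [MeasurableSpace E] (h : E → ℝ) (ν μ : Measure E) : EReal :=
  if Integrable h ν then ((∫ x, h x ∂ν : ℝ) : EReal) - KLdiv ν μ else ⊥

/-- the Gibbs distribution `g` with `dg/dμ ∝ exp ∘ h`. -/
def gibbsOf {E : Type*} [MeasurableSpace E] (μ : Measure E) (h : E → ℝ) : Measure E :=
  (∫⁻ x, ENNReal.ofReal (Real.exp (h x)) ∂μ)⁻¹ •
    μ.withDensity fun x => ENNReal.ofReal (Real.exp (h x))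

section Aux

open Real

variable {E : Type*} [MeasurableSpace E]

/-- Gibbs' inequality: the KL divergence between probability measures is nonnegative. -/
lemma kl_nonneg (ν μ : Measure E) [IsProbabilityMeasure ν] [IsProbabilityMeasure μ]
    (hνμ : ν ≪ μ) (hi : Integrable (llr ν μ) ν) : 0 ≤ ∫ x, llr ν μ x ∂ν := by
  have hmeas : Measurable fun x => exp (- llr ν μ x) := (measurable_llr ν μ).neg.exp
  have hlin : ∫⁻ x, ENNReal.ofReal (exp (- llr ν μ x)) ∂ν ≤ 1 := by
    have hν : ∫⁻ x, ENNReal.ofReal (exp (- llr ν μ x)) ∂ν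
        = ∫⁻ x, ENNReal.ofReal (exp (- llr ν μ x)) ∂(μ.withDensity (ν.rnDeriv μ)) := by
      rw [Measure.withDensity_rnDeriv_eq ν μ hνμ]
    rw [hν, lintegral_withDensity_eq_lintegral_mul μ (Measure.measurable_rnDeriv ν μ)
      (hmeas.ennreal_ofReal)]
    calc ∫⁻ x, (ν.rnDeriv μ * fun x => ENNReal.ofReal (exp (- llr ν μ x))) x ∂μ
        ≤ ∫⁻ _, 1 ∂μ := by
          refine lintegral_mono_ae ?_
          filter_upwards [Measure.rnDeriv_lt_top ν μ] with x hlt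
          simp only [Pi.mul_apply]
          rcases eq_or_ne (ν.rnDeriv μ x) 0 with h0 | h0
          · simp [h0, llr]
          · have htpos : 0 < (ν.rnDeriv μ x).toReal := ENNReal.toReal_pos h0 hlt.ne
            rw [llr, Real.exp_neg, Real.exp_log htpos,
              ENNReal.ofReal_inv_of_pos htpos, ENNReal.ofReal_toReal hlt.ne,
              ENNReal.mul_inv_cancel h0 hlt.ne]
      _ = 1 := by simp
  have hintexp : Integrable (fun x => exp (- llr ν μ x)) ν := by
    refine ⟨hmeas.aestronglyMeasurable, ?_⟩
    rw [hasFiniteIntegral_iff_ofReal (ae_of_all _ fun x => (exp_pos _).le)]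
    exact lt_of_le_of_lt hlin ENNReal.one_lt_top
  have hle : ∫ x, exp (- llr ν μ x) ∂ν ≤ 1 := by
    rw [integral_eq_lintegral_of_nonneg_ae (ae_of_all _ fun x => (exp_pos _).le)
      hmeas.aestronglyMeasurable]
    calc (∫⁻ x, ENNReal.ofReal (exp (- llr ν μ x)) ∂ν).toReal
        ≤ (1 : ℝ≥0∞).toReal := ENNReal.toReal_mono (by simp) hlin
      _ = 1 := by simp
  have hmono : ∫ x, - llr ν μ x ∂ν ≤ ∫ x, (exp (- llr ν μ x) - 1) ∂ν := by
    refine integral_mono hi.neg (hintexp.sub (integrable_const 1)) fun x => ?_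
    have := Real.add_one_le_exp (- llr ν μ x)
    linarith
  rw [integral_neg, integral_sub hintexp (integrable_const 1)] at hmono
  simp only [integral_const, measure_univ, probReal_univ, ENNReal.toReal_one, smul_eq_mul, one_mul] at hmono
  linarith

lemma gibbsOf_eq_tilted (μ : Measure E) [NeZero μ] {h : E → ℝ}
    (hint : Integrable (fun x => exp (h x)) μ) : gibbsOf μ h = μ.tilted h := by
  have hZ : 0 < ∫ x, exp (h x) ∂μ := integral_exp_pos hint
  have hl : ∫⁻ x, ENNReal.ofReal (exp (h x)) ∂μ = ENNReal.ofReal (∫ x, exp (h x) ∂μ) :=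
    (ofReal_integral_eq_lintegral_ofReal hint (ae_of_all _ fun x => (exp_pos _).le)).symm
  rw [gibbsOf, Measure.tilted, hl, ← withDensity_smul' _ _ (by simp; positivity)]
  congr 1
  funext x
  rw [Pi.smul_apply, smul_eq_mul, div_eq_mul_inv, ENNReal.ofReal_mul (exp_pos _).le,
    ENNReal.ofReal_inv_of_pos hZ, mul_comm]

lemma integrable_tilted_iff (μ : Measure E) {f : E → ℝ} (hf : Measurable f) (g : E → ℝ) :
    Integrable g (μ.tilted f) ↔
      Integrable (fun x => g x * (exp (f x) / ∫ x, exp (f x) ∂μ)) μ := by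
  rw [Measure.tilted, integrable_withDensity_iff (by fun_prop) (ae_of_all _ fun x =>
    ENNReal.ofReal_lt_top)]
  refine integrable_congr (ae_of_all _ fun x => ?_)
  simp only []
  rw [ENNReal.toReal_ofReal ?_]
  have hZ : 0 ≤ ∫ x, exp (f x) ∂μ := integral_nonneg fun x => (exp_pos _).le
  positivity

lemma DVterm_tilted (μ : Measure E) [IsProbabilityMeasure μ] {f h : E → ℝ}
    (hfint : Integrable (fun x => exp (f x)) μ)
    (hh : Integrable h (μ.tilted f)) (hfi : Integrable f (μ.tilted f)) :
    DVterm h (μ.tilted f) μ =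
      ((∫ x, h x ∂(μ.tilted f)
        - (∫ x, f x ∂(μ.tilted f) - Real.log (∫ x, exp (f x) ∂μ)) : ℝ) : EReal) := by
  haveI : IsProbabilityMeasure (μ.tilted f) := isProbabilityMeasure_tilted hfint
  have hlog : (fun x => Real.log (((μ.tilted f).rnDeriv μ x).toReal))
      =ᵐ[μ.tilted f] fun x => f x - Real.log (∫ x, exp (f x) ∂μ) :=
    (tilted_absolutelyContinuous μ f).ae_le (log_rnDeriv_tilted_left_self hfint)
  have hillr : Integrable (fun x => Real.log (((μ.tilted f).rnDeriv μ x).toReal)) (μ.tilted f) := by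
    rw [integrable_congr hlog]
    exact hfi.sub (integrable_const _)
  have hKL : KLdiv (μ.tilted f) μ
      = ((∫ x, f x ∂(μ.tilted f) - Real.log (∫ x, exp (f x) ∂μ) : ℝ) : EReal) := by
    rw [KLdiv, if_pos ⟨tilted_absolutelyContinuous μ f, hillr⟩, integral_congr_ae hlog,
      integral_sub hfi (integrable_const _)]
    simp
  rw [DVterm, if_pos hh, hKL, ← EReal.coe_sub]

end Aux

open Real Filter

/-- Donsker–Varadhan variational formula.
For a probability measure `μ` and measurable `h` with `∫ exp(h) dμ < ∞`,
`log ∫ exp(h) dμ = sup_ν (∫ h dν − KL(ν, μ))`, the supremum running over all probability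
measures `ν`, with the convention `∞ - ∞ = -∞`; moreover if `h` is bounded from above on the
support of `μ` then the supremum is attained at the Gibbs distribution `dg/dμ ∝ exp ∘ h`. -/
theorem statement_2
    {E : Type*} [MeasurableSpace E] (μ : Measure E) [IsProbabilityMeasure μ]
    (h : E → ℝ) (hmeas : Measurable h)
    (hint : Integrable (fun x => Real.exp (h x)) μ) :
    (((Real.log (∫ x, Real.exp (h x) ∂μ) : ℝ) : EReal) =
        ⨆ ν : {ν : Measure E // IsProbabilityMeasure ν}, DVterm h (ν : Measure E) μ) ∧
      ((∃ M : ℝ, ∀ᵐ x ∂μ, h x ≤ M) →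
        DVterm h (gibbsOf μ h) μ = ((Real.log (∫ x, Real.exp (h x) ∂μ) : ℝ) : EReal)) := by
  have hZ : 0 < ∫ x, exp (h x) ∂μ := integral_exp_pos hint
  constructor
  · refine le_antisymm ?_ (iSup_le fun ν => ?_)
    · -- lower bound via truncations
      have key : ∀ n : ℕ, ((Real.log (∫ x, exp (min (h x) n) ∂μ) : ℝ) : EReal) ≤
          ⨆ ν : {ν : Measure E // IsProbabilityMeasure ν}, DVterm h (ν : Measure E) μ := by
        intro n
        have hnmeas : Measurable fun x => min (h x) (n : ℝ) := hmeas.min measurable_const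
        have hexpn : Integrable (fun x => exp (min (h x) (n : ℝ))) μ :=
          hint.mono' hnmeas.exp.aestronglyMeasurable (ae_of_all _ fun x => by
            rw [norm_eq_abs, abs_exp]; exact exp_le_exp.2 (min_le_left _ _))
        haveI hP : IsProbabilityMeasure (μ.tilted fun x => min (h x) (n : ℝ)) :=
          isProbabilityMeasure_tilted hexpn
        have hhint : Integrable h (μ.tilted fun x => min (h x) (n : ℝ)) := by
          rw [integrable_tilted_iff μ hnmeas]
          have hb : Integrable (fun x => h x * exp (min (h x) (n : ℝ))) μ := by
            refine Integrable.mono' ((hint.const_mul (exp n)).add (integrable_const 1))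
              (hmeas.mul hnmeas.exp).aestronglyMeasurable (ae_of_all _ fun x => ?_)
            simp only [Pi.add_apply]
            rw [norm_mul, norm_eq_abs, norm_eq_abs, abs_exp]
            rcases le_or_gt 0 (h x) with h0 | h0
            · have h1 : |h x| ≤ exp (h x) := by
                rw [abs_of_nonneg h0]
                linarith [Real.add_one_le_exp (h x)]
              have h2 : exp (min (h x) (n : ℝ)) ≤ exp (n : ℝ) :=
                exp_le_exp.2 (min_le_right _ _)
              have := mul_le_mul h1 h2 (exp_pos _).le (exp_pos _).le
              nlinarith [exp_pos (h x), exp_pos (n : ℝ)]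
            · have hmin : min (h x) (n : ℝ) = h x :=
                min_eq_left (h0.le.trans (Nat.cast_nonneg n))
              rw [hmin]
              have h1 : -h x ≤ exp (-h x) := by linarith [Real.add_one_le_exp (-h x)]
              have h2 : |h x| * exp (h x) ≤ 1 := by
                rw [abs_of_neg h0]
                calc -h x * exp (h x) ≤ exp (-h x) * exp (h x) :=
                      mul_le_mul_of_nonneg_right h1 (exp_pos _).le
                  _ = 1 := by rw [← exp_add, neg_add_cancel, exp_zero]
              have hpos : 0 ≤ exp (n : ℝ) * exp (h x) := by positivity
              linarith
          have := hb.mul_const (∫ x, exp (min (h x) (n : ℝ)) ∂μ)⁻¹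
          simpa only [div_eq_mul_inv, ← mul_assoc] using this
        have hhnint : Integrable (fun x => min (h x) (n : ℝ))
            (μ.tilted fun x => min (h x) (n : ℝ)) := by
          refine (hhint.abs.add (integrable_const (n : ℝ))).mono'
            hnmeas.aestronglyMeasurable (ae_of_all _ fun x => ?_)
          rw [norm_eq_abs, abs_le]
          have hn0 : (0 : ℝ) ≤ n := Nat.cast_nonneg n
          rcases min_cases (h x) (n : ℝ) with ⟨he, _⟩ | ⟨he, _⟩ <;> rw [he] <;>
            simp only [Pi.add_apply] <;>
            [ (constructor <;> cases abs_cases (h x) <;> linarith) ;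
              (constructor <;> cases abs_cases (h x) <;> linarith) ]
        refine le_trans ?_ (le_iSup (fun ν : {ν : Measure E // IsProbabilityMeasure ν} =>
          DVterm h (ν : Measure E) μ) ⟨_, hP⟩)
        rw [DVterm_tilted μ hexpn hhint hhnint, EReal.coe_le_coe_iff]
        have hmono : ∫ x, min (h x) (n : ℝ) ∂(μ.tilted fun x => min (h x) (n : ℝ))
            ≤ ∫ x, h x ∂(μ.tilted fun x => min (h x) (n : ℝ)) :=
          integral_mono hhnint hhint fun x => min_le_left _ _
        linarith
      have hZtend : Tendsto (fun n : ℕ => ∫ x, exp (min (h x) (n : ℝ)) ∂μ) atTop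
          (nhds (∫ x, exp (h x) ∂μ)) := by
        refine tendsto_integral_of_dominated_convergence (fun x => exp (h x))
          (fun n => ((hmeas.min measurable_const).exp).aestronglyMeasurable) hint
          (fun n => ae_of_all _ fun x => ?_) (ae_of_all _ fun x => ?_)
        · rw [norm_eq_abs, abs_exp]; exact exp_le_exp.2 (min_le_left _ _)
        · refine Tendsto.congr' ?_ tendsto_const_nhds
          filter_upwards [eventually_ge_atTop ⌈h x⌉₊] with n hn
          rw [min_eq_left ((Nat.le_ceil (h x)).trans (Nat.cast_le.2 hn))]
      have hlogtend : Tendsto (fun n : ℕ =>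
          ((Real.log (∫ x, exp (min (h x) (n : ℝ)) ∂μ) : ℝ) : EReal)) atTop
          (nhds ((Real.log (∫ x, exp (h x) ∂μ) : ℝ) : EReal)) := by
        refine (continuous_coe_real_ereal.tendsto _).comp ?_
        exact ((Real.continuousAt_log hZ.ne').tendsto).comp hZtend
      exact le_of_tendsto hlogtend (Eventually.of_forall key)
    · -- upper bound
      obtain ⟨ν, hν⟩ := ν
      haveI := hν
      rw [DVterm]
      split_ifs with hI
      · rw [KLdiv]
        split_ifs with hK
        · obtain ⟨hac, hllr⟩ := hK
          have hllr' : Integrable (llr ν μ) ν := hllr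
          haveI : IsProbabilityMeasure (μ.tilted h) := isProbabilityMeasure_tilted hint
          have h1 : ν ≪ μ.tilted h := hac.trans (absolutelyContinuous_tilted hint)
          have h2 : Integrable (llr ν (μ.tilted h)) ν :=
            integrable_llr_tilted_right hac hI hllr' hint
          have h3 := integral_llr_tilted_right hac hI hint hllr'
          have h4 := kl_nonneg ν (μ.tilted h) h1 h2
          rw [← EReal.coe_sub, EReal.coe_le_coe_iff]
          have : ∫ x, Real.log ((ν.rnDeriv μ x).toReal) ∂ν = ∫ x, llr ν μ x ∂ν := rfl
          rw [this]
          linarith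
        · simp
      · exact bot_le
  · rintro ⟨M, hM⟩
    rw [gibbsOf_eq_tilted μ hint]
    have hhg : Integrable h (μ.tilted h) := by
      rw [integrable_tilted_iff μ hmeas]
      have hb : Integrable (fun x => h x * exp (h x)) μ := by
        refine Integrable.mono' (integrable_const (max (|M| * exp |M|) 1))
          (hmeas.mul hmeas.exp).aestronglyMeasurable ?_
        filter_upwards [hM] with x hx
        rw [norm_mul, norm_eq_abs, norm_eq_abs, abs_exp]
        rcases le_or_gt 0 (h x) with h0 | h0
        · refine le_max_of_le_left ?_
          have hxM : h x ≤ |M| := hx.trans (le_abs_self M)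
          refine mul_le_mul ?_ (exp_le_exp.2 hxM) (exp_pos _).le (abs_nonneg M)
          rwa [abs_of_nonneg h0]
        · refine le_max_of_le_right ?_
          have h1 : -h x ≤ exp (-h x) := by linarith [Real.add_one_le_exp (-h x)]
          rw [abs_of_neg h0]
          calc -h x * exp (h x) ≤ exp (-h x) * exp (h x) :=
                mul_le_mul_of_nonneg_right h1 (exp_pos _).le
            _ = 1 := by rw [← exp_add, neg_add_cancel, exp_zero]
      have := hb.mul_const (∫ x, exp (h x) ∂μ)⁻¹
      simpa only [div_eq_mul_inv, ← mul_assoc] using this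
    rw [DVterm_tilted μ hint hhg hhg]
    norm_num

end PB
end
end

section
/- (Layerwise stability in the parameters.) Let σ : ℝ → ℝ be C_σ-Lipschitz and consider two forward recursions from the same input x ∈ ℝ^{d_x}: x^{(0)} = x̃^{(0)} = x, x^{(ℓ)} = σ_ℓ(W_ℓ x^{(ℓ−1)} + b_ℓ) and x̃^{(ℓ)} = σ_ℓ(W̃_ℓ x̃^{(ℓ−1)} + b̃_ℓ), ℓ = 1,…,L, where all parameter blocks are bounded by B (‖W_ℓ‖, ‖W̃_ℓ‖ ≤ B in maximum row sum, ‖b_ℓ‖, ‖b̃_ℓ‖ ≤ B in sup norm). Then for all ℓ = 1,…,L: ‖x^{(ℓ)} − x̃^{(ℓ)}‖ ≤ 2C_σL²( |σ(0)| + ‖x‖ + 1 ) max(1, (C_σB)^{2L}) ‖θ − θ̃‖, where ‖θ − θ̃‖ = max_ℓ max( ‖W_ℓ − W̃_ℓ‖, ‖b_ℓ − b̃_ℓ‖ ). -/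
open scoped BigOperators

noncomputable section

namespace PB

/-- sup norm of a finite-dimensional vector. -/
def vnorm {n : ℕ} (v : Fin n → ℝ) : ℝ := ⨆ i, |v i|

/-- maximum absolute row sum norm of a matrix. -/
def mnorm {m n : ℕ} (W : Fin m → Fin n → ℝ) : ℝ := ⨆ i, ∑ j, |W i j|

/-- forward recursion of a feed-forward network:
`x^{(0)} = x` and `x^{(ℓ+1)} = σ(W_{ℓ+1} x^{(ℓ)} + b_{ℓ+1})` (coordinatewise `σ`). -/
def forward (σ : ℝ → ℝ) {p : ℕ → ℕ} (W : ∀ ℓ : ℕ, Fin (p (ℓ + 1)) → Fin (p ℓ) → ℝ)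
    (b : ∀ ℓ : ℕ, Fin (p (ℓ + 1)) → ℝ) (x : Fin (p 0) → ℝ) : ∀ ℓ : ℕ, Fin (p ℓ) → ℝ
  | 0 => x
  | (ℓ + 1) => fun i => σ ((∑ j, W ℓ i j * forward σ W b x ℓ j) + b ℓ i)

lemma vnorm_nonneg {n : ℕ} (v : Fin n → ℝ) : 0 ≤ vnorm v :=
  Real.iSup_nonneg fun _ => abs_nonneg _

lemma mnorm_nonneg {m n : ℕ} (W : Fin m → Fin n → ℝ) : 0 ≤ mnorm W :=
  Real.iSup_nonneg fun _ => Finset.sum_nonneg fun _ _ => abs_nonneg _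

lemma abs_le_vnorm {n : ℕ} (v : Fin n → ℝ) (i : Fin n) : |v i| ≤ vnorm v :=
  le_ciSup (f := fun i => |v i|) (Set.Finite.bddAbove (Set.finite_range _)) i

lemma rowsum_le_mnorm {m n : ℕ} (W : Fin m → Fin n → ℝ) (i : Fin m) :
    ∑ j, |W i j| ≤ mnorm W :=
  le_ciSup (f := fun i => ∑ j, |W i j|) (Set.Finite.bddAbove (Set.finite_range _)) i

lemma vnorm_le {n : ℕ} {v : Fin n → ℝ} {c : ℝ} (hc : 0 ≤ c) (h : ∀ i, |v i| ≤ c) :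
    vnorm v ≤ c := Real.iSup_le h hc

lemma sum_abs_bound {m n : ℕ} (W : Fin m → Fin n → ℝ) (z : Fin n → ℝ) (i : Fin m) :
    |∑ j, W i j * z j| ≤ mnorm W * vnorm z := by
  calc |∑ j, W i j * z j| ≤ ∑ j, |W i j * z j| := Finset.abs_sum_le_sum_abs _ _
    _ = ∑ j, |W i j| * |z j| := by simp [abs_mul]
    _ ≤ ∑ j, |W i j| * vnorm z :=
        Finset.sum_le_sum fun j _ =>
          mul_le_mul_of_nonneg_left (abs_le_vnorm z j) (abs_nonneg _)
    _ = (∑ j, |W i j|) * vnorm z := (Finset.sum_mul ..).symm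
    _ ≤ mnorm W * vnorm z :=
        mul_le_mul_of_nonneg_right (rowsum_le_mnorm W i) (vnorm_nonneg z)

set_option maxHeartbeats 1600000 in
/-- layerwise stability of the forward recursion in the parameters. -/
theorem statement_11
    (σ : ℝ → ℝ) (Cσ : ℝ) (hσ : ∀ u v : ℝ, |σ u - σ v| ≤ Cσ * |u - v|)
    (L : ℕ) (p : ℕ → ℕ)
    (W W' : ∀ ℓ : ℕ, Fin (p (ℓ + 1)) → Fin (p ℓ) → ℝ)
    (b b' : ∀ ℓ : ℕ, Fin (p (ℓ + 1)) → ℝ)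
    (B : ℝ)
    (hW : ∀ ℓ < L, mnorm (W ℓ) ≤ B) (hb : ∀ ℓ < L, vnorm (b ℓ) ≤ B)
    (hW' : ∀ ℓ < L, mnorm (W' ℓ) ≤ B) (hb' : ∀ ℓ < L, vnorm (b' ℓ) ≤ B)
    (x : Fin (p 0) → ℝ) :
    ∀ ℓ : ℕ, 1 ≤ ℓ → ℓ ≤ L →
      vnorm (fun i => forward σ W b x ℓ i - forward σ W' b' x ℓ i) ≤
        2 * Cσ * L ^ 2 * (|σ 0| + vnorm x + 1) * max 1 ((Cσ * B) ^ (2 * L)) *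
          (⨆ ℓ' : Fin L, max (mnorm fun i j => W ℓ' i j - W' ℓ' i j)
            (vnorm fun i => b ℓ' i - b' ℓ' i)) := by
  intro ℓ h1 h2
  have hL : 1 ≤ L := le_trans h1 h2
  -- basic nonnegativity facts
  have hCσ : 0 ≤ Cσ := by
    have h01 := hσ 0 1
    rw [show |(0:ℝ) - 1| = 1 by norm_num] at h01
    linarith [abs_nonneg (σ 0 - σ 1)]
  have hB : 0 ≤ B := le_trans (mnorm_nonneg (W 0)) (hW 0 hL)
  set Δ : ℝ := ⨆ ℓ' : Fin L, max (mnorm fun i j => W ℓ' i j - W' ℓ' i j)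
      (vnorm fun i => b ℓ' i - b' ℓ' i) with hΔdef
  have hΔ : 0 ≤ Δ :=
    Real.iSup_nonneg fun ℓ' => le_trans (mnorm_nonneg _) (le_max_left _ _)
  have hWΔ : ∀ ℓ' : ℕ, (hℓ' : ℓ' < L) →
      mnorm (fun i j => W ℓ' i j - W' ℓ' i j) ≤ Δ := fun ℓ' hℓ' =>
    le_trans (le_max_left _ _)
      (le_ciSup (f := fun ℓ'' : Fin L => max (mnorm fun i j => W ℓ'' i j - W' ℓ'' i j)
        (vnorm fun i => b ℓ'' i - b' ℓ'' i))
        (Set.Finite.bddAbove (Set.finite_range _)) (⟨ℓ', hℓ'⟩ : Fin L))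
  have hbΔ : ∀ ℓ' : ℕ, (hℓ' : ℓ' < L) →
      vnorm (fun i => b ℓ' i - b' ℓ' i) ≤ Δ := fun ℓ' hℓ' =>
    le_trans (le_max_right _ _)
      (le_ciSup (f := fun ℓ'' : Fin L => max (mnorm fun i j => W ℓ'' i j - W' ℓ'' i j)
        (vnorm fun i => b ℓ'' i - b' ℓ'' i))
        (Set.Finite.bddAbove (Set.finite_range _)) (⟨ℓ', hℓ'⟩ : Fin L))
  set C : ℝ := |σ 0| + vnorm x + 1 with hCdef
  have hC : 1 ≤ C := by
    rw [hCdef]; linarith [abs_nonneg (σ 0), vnorm_nonneg x]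
  set K : ℝ := Cσ * B with hKdef
  have hK0 : 0 ≤ K := mul_nonneg hCσ hB
  set m : ℝ := max 1 K with hmdef
  have hm1 : 1 ≤ m := le_max_left _ _
  have hm0 : 0 ≤ m := le_trans zero_le_one hm1
  have hKm : K ≤ m := le_max_right _ _
  have hCabs : vnorm x + 1 ≤ C := by
    rw [hCdef]; linarith [abs_nonneg (σ 0)]
  have hCabs2 : |σ 0| + 1 ≤ C := by
    rw [hCdef]; linarith [vnorm_nonneg x]
  clear_value Δ C K m
  have habsσ : ∀ t : ℝ, |σ t| ≤ |σ 0| + Cσ * |t| := by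
    intro t
    have h := hσ t 0
    rw [sub_zero] at h
    calc |σ t| = |σ t - σ 0 + σ 0| := by ring_nf
      _ ≤ |σ t - σ 0| + |σ 0| := abs_add_le _ _
      _ ≤ Cσ * |t| + |σ 0| := by linarith
      _ = |σ 0| + Cσ * |t| := by ring
  -- main induction
  have key : ∀ n : ℕ, n ≤ L →
      vnorm (forward σ W' b' x n) + 1 ≤ C * ((n : ℝ) + 1) * m ^ n ∧
      vnorm (fun i => forward σ W b x n i - forward σ W' b' x n i) ≤
        Cσ * Δ * C * (n : ℝ) ^ 2 * m ^ (2 * n) := by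
    intro n
    induction n with
    | zero =>
      intro _
      constructor
      · simp only [forward]
        calc vnorm x + 1 ≤ C := hCabs
          _ = C * (((0:ℕ):ℝ) + 1) * m ^ 0 := by push_cast; ring
      · have : vnorm (fun i => forward σ W b x 0 i - forward σ W' b' x 0 i) ≤ 0 := by
          apply vnorm_le le_rfl
          intro i; simp [forward]
        calc vnorm (fun i => forward σ W b x 0 i - forward σ W' b' x 0 i) ≤ 0 := this
          _ ≤ _ := by
            push_cast
            nlinarith [mul_nonneg (mul_nonneg hCσ hΔ) (le_trans zero_le_one hC),
              pow_nonneg hm0 (2*0)]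
    | succ n ih =>
      intro hn
      have hnL : n < L := lt_of_lt_of_le (Nat.lt_succ_self n) hn
      obtain ⟨ihM, ihe⟩ := ih (le_of_lt hnL)
      set y : Fin (p n) → ℝ := forward σ W b x n with hydef
      set y' : Fin (p n) → ℝ := forward σ W' b' x n with hy'def
      set M : ℝ := vnorm y' with hMdef
      set e : ℝ := vnorm (fun i => y i - y' i) with hedef
      have hM0 : 0 ≤ M := vnorm_nonneg _
      have he0 : 0 ≤ e := vnorm_nonneg _
      clear_value M e
      have hq1 : (1:ℝ) ≤ m ^ n := one_le_pow₀ hm1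
      constructor
      · -- bound on the primed iterates
        have hcoord : ∀ i, |forward σ W' b' x (n+1) i| ≤ |σ 0| + K * (M + 1) := by
          intro i
          have hfw : forward σ W' b' x (n+1) i
              = σ ((∑ j, W' n i j * y' j) + b' n i) := rfl
          rw [hfw]
          refine le_trans (habsσ _) ?_
          have h2 : |(∑ j, W' n i j * y' j) + b' n i| ≤ B * M + B := by
            calc |(∑ j, W' n i j * y' j) + b' n i|
                ≤ |∑ j, W' n i j * y' j| + |b' n i| := abs_add_le _ _
              _ ≤ mnorm (W' n) * M + vnorm (b' n) := by
                  rw [hMdef]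
                  exact add_le_add (sum_abs_bound _ _ i) (abs_le_vnorm _ i)
              _ ≤ B * M + B := add_le_add
                  (mul_le_mul_of_nonneg_right (hW' n hnL) hM0) (hb' n hnL)
          have : Cσ * |(∑ j, W' n i j * y' j) + b' n i| ≤ Cσ * (B * M + B) :=
            mul_le_mul_of_nonneg_left h2 hCσ
          have heq : Cσ * (B * M + B) = K * (M + 1) := by rw [hKdef]; ring
          linarith
        have hv : vnorm (forward σ W' b' x (n+1)) ≤ |σ 0| + K * (M + 1) := by
          apply vnorm_le _ hcoord
          have : 0 ≤ K * (M + 1) := mul_nonneg hK0 (by linarith)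
          positivity
        have harith : |σ 0| + K * (M + 1) + 1 ≤ C * ((n:ℝ) + 1 + 1) * m ^ (n + 1) := by
          have hMm : M + 1 ≤ C * ((n:ℝ) + 1) * m ^ n := ihM
          have h3 : K * (M + 1) ≤ m * (C * ((n:ℝ) + 1) * m ^ n) := by
            calc K * (M + 1) ≤ m * (M + 1) :=
                mul_le_mul_of_nonneg_right hKm (by linarith)
              _ ≤ m * (C * ((n:ℝ) + 1) * m ^ n) :=
                mul_le_mul_of_nonneg_left hMm hm0
          have h4 : |σ 0| + 1 ≤ C := hCabs2
          have h5 : C ≤ C * m ^ (n+1) := by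
            nlinarith [one_le_pow₀ (n := n+1) hm1]
          have h6 : m * (C * ((n:ℝ) + 1) * m ^ n) = C * ((n:ℝ) + 1) * m ^ (n+1) := by
            rw [pow_succ]; ring
          have hn0 : (0:ℝ) ≤ (n:ℝ) := Nat.cast_nonneg n
          nlinarith [one_le_pow₀ (n := n+1) hm1]
        have : ((n:ℝ) + 1 + 1) = (((n+1 : ℕ)):ℝ) + 1 := by push_cast; ring
        rw [← this]
        linarith
      · -- bound on the difference
        have hcoord : ∀ i, |forward σ W b x (n+1) i - forward σ W' b' x (n+1) i| ≤
            Cσ * (B * e + Δ * (M + 1)) := by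
          intro i
          have hfw : forward σ W b x (n+1) i - forward σ W' b' x (n+1) i
              = σ ((∑ j, W n i j * y j) + b n i) - σ ((∑ j, W' n i j * y' j) + b' n i) := rfl
          rw [hfw]
          refine le_trans (hσ _ _) ?_
          have hdec : ((∑ j, W n i j * y j) + b n i) - ((∑ j, W' n i j * y' j) + b' n i)
              = (∑ j, W n i j * (y j - y' j)) + ((∑ j, (W n i j - W' n i j) * y' j)
                + (b n i - b' n i)) := by
            have h1 : (∑ j, W n i j * (y j - y' j)) + ∑ j, (W n i j - W' n i j) * y' j
                = (∑ j, W n i j * y j) - ∑ j, W' n i j * y' j := by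
              rw [← Finset.sum_add_distrib, ← Finset.sum_sub_distrib]
              exact Finset.sum_congr rfl fun j _ => by ring
            linarith [h1]
          rw [hdec]
          have t1 : |∑ j, W n i j * (y j - y' j)| ≤ B * e := by
            refine le_trans (sum_abs_bound (W n) (fun j => y j - y' j) i) ?_
            rw [← hedef]
            exact mul_le_mul_of_nonneg_right (hW n hnL) he0
          have t2 : |∑ j, (W n i j - W' n i j) * y' j| ≤ Δ * M := by
            refine le_trans (sum_abs_bound (fun i j => W n i j - W' n i j) y' i) ?_
            rw [← hMdef]
            exact mul_le_mul_of_nonneg_right (hWΔ n hnL) hM0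
          have t3 : |b n i - b' n i| ≤ Δ :=
            le_trans (abs_le_vnorm (fun i => b n i - b' n i) i) (hbΔ n hnL)
          have habs : |(∑ j, W n i j * (y j - y' j)) + ((∑ j, (W n i j - W' n i j) * y' j)
              + (b n i - b' n i))| ≤ B * e + (Δ * M + Δ) := by
            refine le_trans (abs_add_le _ _) ?_
            refine add_le_add t1 (le_trans (abs_add_le _ _) (add_le_add t2 t3))
          have : Cσ * _ ≤ Cσ * (B * e + (Δ * M + Δ)) := mul_le_mul_of_nonneg_left habs hCσ
          refine le_trans this (le_of_eq ?_)
          ring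
        have hv : vnorm (fun i => forward σ W b x (n+1) i - forward σ W' b' x (n+1) i) ≤
            Cσ * (B * e + Δ * (M + 1)) := by
          apply vnorm_le _ hcoord
          have h0 : 0 ≤ B * e + Δ * (M + 1) := by
            have := mul_nonneg hB he0
            have := mul_nonneg hΔ (by linarith : (0:ℝ) ≤ M + 1)
            linarith
          exact mul_nonneg hCσ h0
        refine le_trans hv ?_
        -- arithmetic
        have hMm : M + 1 ≤ C * ((n:ℝ) + 1) * m ^ n := ihM
        have hn0 : (0:ℝ) ≤ (n:ℝ) := Nat.cast_nonneg n
        have hpow : m ^ (2 * (n + 1)) = m ^ (2 * n) * m * m := by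
          rw [show 2 * (n + 1) = 2 * n + 1 + 1 by ring, pow_succ, pow_succ]
        have hq2 : (1:ℝ) ≤ m ^ (2 * n) := one_le_pow₀ hm1
        have hmn_le : m ^ n ≤ m ^ (2 * n) * m :=
          le_trans (pow_le_pow_right₀ hm1 (by omega : n ≤ 2 * n)) (by nlinarith)
        have step1 : Cσ * B * e ≤ m * (Cσ * Δ * C * (n:ℝ) ^ 2 * m ^ (2 * n)) := by
          calc Cσ * B * e = K * e := by rw [hKdef]
            _ ≤ m * e := mul_le_mul_of_nonneg_right hKm he0
            _ ≤ m * (Cσ * Δ * C * (n:ℝ) ^ 2 * m ^ (2 * n)) :=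
                mul_le_mul_of_nonneg_left ihe hm0
        have step2 : Cσ * Δ * (M + 1) ≤ Cσ * Δ * (C * ((n:ℝ) + 1) * m ^ n) :=
          mul_le_mul_of_nonneg_left hMm (mul_nonneg hCσ hΔ)
        have hcast : (((n+1:ℕ)):ℝ) = (n:ℝ) + 1 := by push_cast; ring
        rw [hcast, hpow]
        have expand : Cσ * (B * e + Δ * (M + 1)) = Cσ * B * e + Cσ * Δ * (M + 1) := by ring
        rw [expand]
        have hP : 0 ≤ Cσ * Δ * C := mul_nonneg (mul_nonneg hCσ hΔ) (le_trans zero_le_one hC)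
        have hqm0 : 0 ≤ m ^ (2*n) * m := mul_nonneg (pow_nonneg hm0 _) hm0
        have sA : Cσ * B * e ≤ Cσ * Δ * C * (n:ℝ)^2 * (m ^ (2*n) * m) := by
          refine le_trans step1 (le_of_eq ?_); ring
        have sB : Cσ * Δ * (M + 1) ≤ Cσ * Δ * C * ((n:ℝ) + 1) * (m ^ (2*n) * m) := by
          refine le_trans step2 ?_
          have h7 : 0 ≤ Cσ * Δ * C * ((n:ℝ) + 1) := mul_nonneg hP (by positivity)
          calc Cσ * Δ * (C * ((n:ℝ)+1) * m ^ n)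
              = Cσ * Δ * C * ((n:ℝ)+1) * m ^ n := by ring
            _ ≤ Cσ * Δ * C * ((n:ℝ)+1) * (m ^ (2*n) * m) :=
                mul_le_mul_of_nonneg_left hmn_le h7
        have hfin : Cσ * Δ * C * (n:ℝ)^2 * (m^(2*n)*m) + Cσ * Δ * C * ((n:ℝ)+1) * (m^(2*n)*m)
            ≤ Cσ * Δ * C * ((n:ℝ)+1)^2 * (m^(2*n)*m*m) := by
          have h9 : (n:ℝ)^2 + ((n:ℝ)+1) ≤ ((n:ℝ)+1)^2 := by
            nlinarith [Nat.cast_nonneg (α := ℝ) n]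
          have h10 : m^(2*n)*m ≤ m^(2*n)*m*m := by nlinarith [hqm0, hm1]
          have h8 : ((n:ℝ)^2 + ((n:ℝ)+1)) * (m^(2*n)*m) ≤ ((n:ℝ)+1)^2 * (m^(2*n)*m*m) :=
            calc ((n:ℝ)^2 + ((n:ℝ)+1)) * (m^(2*n)*m) ≤ ((n:ℝ)+1)^2 * (m^(2*n)*m) :=
                mul_le_mul_of_nonneg_right h9 hqm0
              _ ≤ ((n:ℝ)+1)^2 * (m^(2*n)*m*m) :=
                mul_le_mul_of_nonneg_left h10 (by positivity)
          calc Cσ * Δ * C * (n:ℝ)^2 * (m^(2*n)*m) + Cσ * Δ * C * ((n:ℝ)+1) * (m^(2*n)*m)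
              = Cσ * Δ * C * (((n:ℝ)^2 + ((n:ℝ)+1)) * (m^(2*n)*m)) := by ring
            _ ≤ Cσ * Δ * C * (((n:ℝ)+1)^2 * (m^(2*n)*m*m)) := mul_le_mul_of_nonneg_left h8 hP
            _ = Cσ * Δ * C * ((n:ℝ)+1)^2 * (m^(2*n)*m*m) := by ring
        linarith [sA, sB, hfin]
  -- conclude
  obtain ⟨-, hdiff⟩ := key ℓ h2
  have hmax : max 1 (K ^ (2 * L)) = m ^ (2 * L) := by
    rcases le_total K 1 with hK | hK
    · rw [max_eq_left (pow_le_one₀ hK0 hK), hmdef, max_eq_left hK, one_pow]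
    · rw [max_eq_right (one_le_pow₀ hK), hmdef, max_eq_right hK]
  rw [hmax]
  refine le_trans hdiff ?_
  have hpowle : m ^ (2 * ℓ) ≤ m ^ (2 * L) := pow_le_pow_right₀ hm1 (by omega)
  have hℓL : ((ℓ:ℝ)) ^ 2 ≤ ((L:ℝ)) ^ 2 := by
    have : (ℓ:ℝ) ≤ (L:ℝ) := Nat.cast_le.mpr h2
    nlinarith [Nat.cast_nonneg (α := ℝ) ℓ]
  have hC0 : (0:ℝ) ≤ C := le_trans zero_le_one hC
  have hL2 : (0:ℝ) ≤ (L:ℝ) ^ 2 := sq_nonneg _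
  have hpow0 : (0:ℝ) ≤ m ^ (2 * L) := pow_nonneg hm0 _
  have h₁ : Cσ * Δ * C * (ℓ:ℝ) ^ 2 * m ^ (2 * ℓ) ≤ Cσ * Δ * C * (L:ℝ) ^ 2 * m ^ (2 * L) := by
    have hnn : (0:ℝ) ≤ Cσ * Δ * C := mul_nonneg (mul_nonneg hCσ hΔ) hC0
    calc Cσ * Δ * C * (ℓ:ℝ) ^ 2 * m ^ (2 * ℓ)
        ≤ Cσ * Δ * C * (ℓ:ℝ) ^ 2 * m ^ (2 * L) :=
          mul_le_mul_of_nonneg_left hpowle (mul_nonneg hnn (sq_nonneg _))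
      _ ≤ Cσ * Δ * C * (L:ℝ) ^ 2 * m ^ (2 * L) := by
          have := mul_le_mul_of_nonneg_left hℓL hnn
          nlinarith
  refine le_trans h₁ ?_
  have : Cσ * Δ * C * (L:ℝ) ^ 2 * m ^ (2 * L) = Cσ * (L:ℝ) ^ 2 * C * m ^ (2 * L) * Δ := by ring
  rw [this]
  nlinarith [mul_nonneg (mul_nonneg (mul_nonneg (mul_nonneg hCσ hL2) hC0) hpow0) hΔ]

end PB
end
end
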